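/- Let g be a positive-definite symmetric bilinear form on an n-dimensional real vector space V (n ≥ 2), and let b, y ∈ V with y ≠ 0 and b, y linearly independent. With p > 0, and ḡ defined as ḡ(u,v) = p·g(u,v) + p₀·β_b(u)β_b(v) + p₋₁·(β_b(u)β_y(v) + β_b(v)β_y(u)) + p₋₂·β_y(u)β_y(v) where β_b = g(b,·), β_y = g(y,·): if the 2×2 matrix of ḡ restricted to span{b,y} (in the basis b, y) is positive definite, then ḡ is positive definite on all of V. -/

import Mathlib

/-- If the β-changed metric `ḡ` restricted to `span{b, y}` (as a 2×2 matrix in the basis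
`b, y`) is positive definite, then `ḡ` is positive definite on all of `V`. -/
theorem stmt5 {V : Type*} [AddCommGroup V] [Module ℝ V] [FiniteDimensional ℝ V]
    (hdim : 2 ≤ Module.finrank ℝ V)
    (g : LinearMap.BilinForm ℝ V) (hsymm : ∀ u v : V, g u v = g v u)
    (hpos : ∀ v : V, v ≠ 0 → 0 < g v v)
    (b y : V) (hy : y ≠ 0) (hby : LinearIndependent ℝ ![b, y])
    (p p₀ pm1 pm2 : ℝ) (hp : 0 < p)
    (G : V → V → ℝ)
    (hG : ∀ u v : V, G u v = p * g u v + p₀ * (g b u * g b v)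
      + pm1 * (g b u * g y v + g b v * g y u) + pm2 * (g y u * g y v))
    (h2 : Matrix.PosDef !![G b b, G b y; G y b, G y y]) :
    ∀ u : V, u ≠ 0 → 0 < G u u := by
  intro u hu
  have pair := LinearIndependent.pair_iff.mp hby
  have hb0 : b ≠ 0 := by
    have := hby.ne_zero 0; simpa using this
  have hBpos : 0 < g b b := hpos b hb0
  have hDpos : 0 < g y y := hpos y hy
  have hyb : g y b = g b y := hsymm y b
  -- Gram determinant is positive
  have hdet : 0 < g b b * g y y - g b y ^ 2 := by
    set v := g b b • y - g b y • b with hv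
    have hv0 : v ≠ 0 := by
      intro h
      have : (-(g b y)) • b + g b b • y = 0 := by
        rw [hv] at h; linear_combination (norm := module) h
      exact absurd (pair _ _ this).2 (ne_of_gt hBpos)
    have hvv : g v v = g b b * (g b b * g y y - g b y ^ 2) := by
      simp only [hv, map_sub, map_smul, LinearMap.sub_apply, LinearMap.smul_apply,
        smul_eq_mul]
      rw [hyb]; ring
    have := hpos v hv0
    rw [hvv] at this
    nlinarith
  have hdne : g b b * g y y - g b y ^ 2 ≠ 0 := ne_of_gt hdet
  set dd := g b b * g y y - g b y ^ 2 with hdd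
  set α := (g y y * g b u - g b y * g y u) / dd with hα
  set β := (g b b * g y u - g b y * g b u) / dd with hβ
  set z := α • b + β • y with hz
  set w := u - z with hw
  -- key scalar products
  have hgbz : g b z = g b u := by
    simp only [hz, map_add, map_smul, smul_eq_mul]
    rw [hα, hβ]
    field_simp
    ring
  have hgyz : g y z = g y u := by
    simp only [hz, map_add, map_smul, smul_eq_mul]
    rw [hα, hβ, hyb]
    field_simp
    ring
  have hgbw : g b w = 0 := by rw [hw, map_sub, hgbz, sub_self]
  have hgyw : g y w = 0 := by rw [hw, map_sub, hgyz, sub_self]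
  have hgwz : g w z = 0 := by
    simp only [hz, map_add, map_smul, smul_eq_mul, hsymm w b, hsymm w y, hgbw, hgyw]
    ring
  have huu : g u u = g w w + g z z := by
    have hu' : u = w + z := by rw [hw]; abel
    rw [hu']
    simp only [map_add, LinearMap.add_apply]
    rw [hgwz, hsymm z w, hgwz]
    ring
  -- G u u = p * g w w + G z z
  have hGz : g z z = α * α * g b b + 2 * α * β * g b y + β * β * g y y := by
    simp only [hz, map_add, map_smul, LinearMap.add_apply, LinearMap.smul_apply, smul_eq_mul]
    rw [hyb]; ring
  have hsplit : G u u = p * g w w + G z z := by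
    rw [hG u u, hG z z, huu, hgbz, hgyz]; ring
  -- quadratic form identity
  have hgbz' : g b z = α * g b b + β * g b y := by
    simp only [hz, map_add, map_smul, smul_eq_mul]
  have hgyz' : g y z = α * g b y + β * g y y := by
    simp only [hz, map_add, map_smul, smul_eq_mul]; rw [hyb]
  have hQ : G z z = α * (G b b * α + G b y * β) + β * (G y b * α + G y y * β) := by
    rw [hG z z, hG b b, hG b y, hG y b, hG y y, hgbz', hgyz', hGz, hyb]
    ring
  have hQpos : ∀ hαβ : ¬(α = 0 ∧ β = 0), 0 < G z z := by
    intro hαβ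
    have hx : (![α, β] : Fin 2 → ℝ) ≠ 0 := by
      intro h
      exact hαβ ⟨congrFun h 0, congrFun h 1⟩
    have := h2.dotProduct_mulVec_pos hx
    simp only [dotProduct, Matrix.mulVec, star_trivial, Fin.sum_univ_two,
      Matrix.cons_val', Matrix.cons_val_zero, Matrix.cons_val_one, Matrix.head_cons,
      Matrix.head_fin_const, Matrix.empty_val', Matrix.cons_val_fin_one,
      Matrix.of_apply, Pi.star_apply, star_trivial] at this
    rw [hQ]
    convert this using 2 <;> ring
  clear_value dd α β z w
  by_cases hαβ : α = 0 ∧ β = 0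
  · have hz0 : z = 0 := by rw [hz, hαβ.1, hαβ.2]; simp
    have hw0 : w ≠ 0 := by rw [hw, hz0, sub_zero]; exact hu
    have hGz0 : G z z = 0 := by
      rw [hG z z, hz0]; simp
    rw [hsplit, hGz0]
    have := hpos w hw0
    nlinarith
  · have h1 := hQpos hαβ
    rcases eq_or_ne w 0 with hw0 | hw0
    · have hww : g w w = 0 := by rw [hw0]; simp
      rw [hsplit, hww]; linarith
    · have := hpos w hw0
      rw [hsplit]; nlinarith
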